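/- Let n ≥ 3 and let rev : B_n → B_n be the anti-automorphism determined by rev(σ_i) = σ_i for all i (i.e., rev(ab) = rev(b)rev(a); rev sends a positive word to the same word read backwards). Then for all 1 < d_1 < ⋯ < d_m < n, rev(δ_{d_1,…,d_m}) = δ_{u_1,…,u_k}. -/

import Mathlib

/-- Relations for the braid group on `n` strands, with generators `σ_1, …, σ_{n-1}`
(generators with indices outside `{1, …, n-1}` are killed). -/
def braidRels (n : ℕ) : Set (FreeGroup ℕ) :=
  { r | (∃ i : ℕ, 1 ≤ i ∧ i + 2 ≤ n ∧
          r = FreeGroup.of i * FreeGroup.of (i + 1) * FreeGroup.of i *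
              (FreeGroup.of (i + 1) * FreeGroup.of i * FreeGroup.of (i + 1))⁻¹) ∨
       (∃ i j : ℕ, 1 ≤ i ∧ i + 2 ≤ j ∧ j + 1 ≤ n ∧
          r = FreeGroup.of i * FreeGroup.of j * (FreeGroup.of j * FreeGroup.of i)⁻¹) ∨
       (∃ i : ℕ, (i = 0 ∨ n ≤ i) ∧ r = FreeGroup.of i) }

/-- The braid group `B_n` on `n` strands. -/
abbrev B (n : ℕ) : Type := PresentedGroup (braidRels n)

/-- The Artin generator `σ_i` of `B n`. -/
def σb (n i : ℕ) : B n := PresentedGroup.of i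

/-- The element of `B n` represented by a word in the generators. -/
def word (n : ℕ) (l : List ℕ) : B n := (l.map (σb n)).prod

/-- The positive braid monoid `B_n^+`. -/
def Bpos (n : ℕ) : Submonoid (B n) :=
  Submonoid.closure { x | ∃ i : ℕ, 1 ≤ i ∧ i ≤ n - 1 ∧ x = σb n i }

/-- The prefix order: `a ≼ b`. -/
def bLe (n : ℕ) (a b : B n) : Prop := a⁻¹ * b ∈ Bpos n

/-- The suffix order: `a ≽ b`. -/
def bGe (n : ℕ) (a b : B n) : Prop := a * b⁻¹ ∈ Bpos n

/-- The list `[a, a-1, …, b]` (empty if `a < b`). -/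
def descList (a b : ℕ) : List ℕ := (List.range' b (a + 1 - b)).reverse

/-- The Garside element `Δ_n = σ_1 (σ_2 σ_1) ⋯ (σ_{n-1} σ_{n-2} ⋯ σ_1)`. -/
def DeltaB (n : ℕ) : B n :=
  word n (((List.range' 1 (n - 1)).map fun t => descList t 1).flatten)

/-- The element `δ = σ_1 σ_2 ⋯ σ_{n-1}`. -/
def deltaB (n : ℕ) : B n := word n (List.range' 1 (n - 1))

/-- Simple elements: positive prefixes of `Δ_n`. -/
def isSimple (n : ℕ) (s : B n) : Prop := s ∈ Bpos n ∧ bLe n s (DeltaB n)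

/-- The starting set `S(a) = {i : σ_i ≼ a}`. -/
def startSet (n : ℕ) (a : B n) : Set ℕ :=
  { i | 1 ≤ i ∧ i ≤ n - 1 ∧ bLe n (σb n i) a }

/-- The finishing set `F(a) = {i : a ≽ σ_i}`. -/
def finishSet (n : ℕ) (a : B n) : Set ℕ :=
  { i | 1 ≤ i ∧ i ≤ n - 1 ∧ bGe n a (σb n i) }

/-- The simple conjugate `δ_{d_1,…,d_m}` of `δ`, where `l = [d_1, …, d_m]`. -/
def deltaD (n : ℕ) (l : List ℕ) : B n :=
  word n ((((1 :: l).zip (l ++ [n])).map fun p => descList (p.2 - 1) p.1).flatten)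

/-- The simple element `α_{i,j}`. -/
def alphaB (n i j : ℕ) : B n :=
  if i ≤ j then word n (List.range' i (j + 1 - i)) else word n (descList i j)

/-- The conjugate `x_{η,i_1,…,i_{l+1}} = w⁻¹ η w`, `w = α_{i_1,i_2} α_{i_2,i_3} ⋯ α_{i_l,i_{l+1}}`. -/
def xbraid (n : ℕ) (η : B n) (i : ℕ → ℕ) (l : ℕ) : B n :=
  (((List.range l).map fun idx => alphaB n (i (idx + 1)) (i (idx + 2))).prod)⁻¹ * η *
    ((List.range l).map fun idx => alphaB n (i (idx + 1)) (i (idx + 2))).prod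

/-- A left-weighted sequence of proper simple factors. -/
def LWSeq (n : ℕ) (ys : List (B n)) : Prop :=
  (∀ y ∈ ys, isSimple n y ∧ y ≠ 1 ∧ y ≠ DeltaB n) ∧
  List.Chain' (fun a b => startSet n b ⊆ finishSet n a) ys

/-! ### Auxiliary machinery for `statement3` -/

section Statement3Aux

open List

lemma st3_rel_eq_one {n : ℕ} {r : FreeGroup ℕ} (h : r ∈ braidRels n) :
    (QuotientGroup.mk r : B n) = 1 := by
  rw [QuotientGroup.eq_one_iff]
  exact Subgroup.subset_normalClosure h

lemma st3_σb_eq_mk (n i : ℕ) : σb n i = (QuotientGroup.mk (FreeGroup.of i) : B n) := rfl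

lemma st3_σb_out {n i : ℕ} (h : i = 0 ∨ n ≤ i) : σb n i = 1 := by
  rw [st3_σb_eq_mk]
  exact st3_rel_eq_one (Or.inr (Or.inr ⟨i, h, rfl⟩))

lemma st3_σcomm {n i j : ℕ} (h : i + 2 ≤ j) : σb n i * σb n j = σb n j * σb n i := by
  rcases Nat.eq_zero_or_pos i with hi | hi
  · rw [hi, st3_σb_out (Or.inl rfl)]; group
  rcases le_or_gt (j + 1) n with hj | hj
  · have h1 := st3_rel_eq_one (n := n) (Or.inr (Or.inl ⟨i, j, hi, h, hj, rfl⟩))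
    rw [st3_σb_eq_mk, st3_σb_eq_mk]
    rw [QuotientGroup.mk_mul, QuotientGroup.mk_inv, QuotientGroup.mk_mul,
      QuotientGroup.mk_mul, mul_inv_eq_one] at h1
    exact h1
  · rw [st3_σb_out (i := j) (Or.inr (by omega))]; group

lemma st3_word_nil (n : ℕ) : word n [] = 1 := rfl

lemma st3_word_cons (n a : ℕ) (l : List ℕ) : word n (a :: l) = σb n a * word n l := by
  simp [word]

lemma st3_word_append (n : ℕ) (a b : List ℕ) :
    word n (a ++ b) = word n a * word n b := by
  simp [word]

lemma st3_σ_word_comm {n x : ℕ} {b : List ℕ}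
    (h : ∀ y ∈ b, σb n x * σb n y = σb n y * σb n x) :
    σb n x * word n b = word n b * σb n x := by
  induction b with
  | nil => simp [st3_word_nil]
  | cons y b ih =>
    rw [st3_word_cons, ← mul_assoc, h y (by simp), mul_assoc,
      ih (fun z hz => h z (by simp [hz])), mul_assoc]

lemma st3_word_comm {n : ℕ} {a b : List ℕ}
    (h : ∀ x ∈ a, ∀ y ∈ b, σb n x * σb n y = σb n y * σb n x) :
    word n a * word n b = word n b * word n a := by
  induction a with
  | nil => simp [st3_word_nil]
  | cons x a ih =>
    rw [st3_word_cons, mul_assoc, ih (fun z hz => h z (by simp [hz])), ← mul_assoc,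
      st3_σ_word_comm (h x (by simp)), mul_assoc]

lemma st3_mem_descList {a b x : ℕ} (h : x ∈ descList a b) : b ≤ x ∧ x ≤ a := by
  simp only [descList, List.mem_reverse, List.mem_range'_1] at h
  omega

lemma st3_range'_concat (s n : ℕ) : List.range' s (n + 1) = List.range' s n ++ [s + n] := by
  have h := List.range'_append (s := s) (m := n) (n := 1) (step := 1)
  simp only [one_mul, List.range'_one] at h
  exact h.symm

lemma st3_descList_cons {a b : ℕ} (hb : 1 ≤ b) (h : b ≤ a) :
    descList a b = a :: descList (a - 1) b := by
  unfold descList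
  have h1 : a + 1 - b = (a - b) + 1 := by omega
  have h2 : a - 1 + 1 - b = a - b := by omega
  rw [h1, h2, st3_range'_concat]
  have h4 : b + (a - b) = a := by omega
  simp [h4]

lemma st3_descList_self (a : ℕ) : descList a a = [a] := by
  simp [descList]

lemma st3_descList_reverse (a b : ℕ) :
    (descList a b).reverse = List.range' b (a + 1 - b) := by
  simp [descList]

/-- The defining word of `deltaD`. -/
def st3Wd (N : ℕ) (l : List ℕ) : List ℕ :=
  (((1 :: l).zip (l ++ [N])).map fun p => descList (p.2 - 1) p.1).flatten

lemma st3_deltaD_eq (n : ℕ) (l : List ℕ) : deltaD n l = word n (st3Wd n l) := rfl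

lemma st3Wd_nil (N : ℕ) : st3Wd N [] = descList (N - 1) 1 := by
  simp [st3Wd]

lemma st3Wd_concat (N d : ℕ) (l : List ℕ) :
    st3Wd N (l ++ [d]) = st3Wd d l ++ descList (N - 1) d := by
  unfold st3Wd
  have h1 : (1 :: (l ++ [d])) = (1 :: l) ++ [d] := by simp
  have h2 : (l ++ [d]) ++ [N] = (l ++ [d]) ++ [N] := rfl
  rw [h1]
  rw [List.zip_append (by simp)]
  simp

lemma st3Wd_bounds {N : ℕ} {c : List ℕ} (hN : 1 ≤ N)
    (hc : ∀ y ∈ c, 1 ≤ y ∧ y ≤ N) :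
    ∀ x ∈ st3Wd N c, 1 ≤ x ∧ x + 1 ≤ N := by
  intro x hx
  simp only [st3Wd, List.mem_flatten, List.mem_map] at hx
  obtain ⟨s, ⟨p, hp, rfl⟩, hxs⟩ := hx
  have h1 : p.1 ∈ 1 :: c := (List.of_mem_zip hp).1
  have h2 : p.2 ∈ c ++ [N] := (List.of_mem_zip hp).2
  have hb := st3_mem_descList hxs
  have hp1 : 1 ≤ p.1 := by
    rcases List.mem_cons.mp h1 with h | h
    · omega
    · exact (hc _ h).1
  have hp2 : 1 ≤ p.2 ∧ p.2 ≤ N := by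
    rcases List.mem_append.mp h2 with h | h
    · exact ⟨(hc _ h).1, (hc _ h).2⟩
    · simp at h; omega
  omega

lemma st3Wd_range' (k : ℕ) : ∀ (c : List ℕ) (e : ℕ),
    st3Wd (e + k) (c ++ List.range' e k) = st3Wd e c ++ List.range' e k := by
  induction k with
  | zero => intro c e; simp
  | succ k ih =>
    intro c e
    rw [st3_range'_concat, ← List.append_assoc, st3Wd_concat]
    have h1 : e + (k + 1) - 1 = e + k := by omega
    rw [h1, st3_descList_self, ih c e, List.append_assoc]

lemma st3_extend {n : ℕ} (c : List ℕ) (d : ℕ) (hd : 1 ≤ d)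
    (hc : List.Pairwise (· < ·) c) (hbd : ∀ y ∈ c, 1 ≤ y ∧ y + 1 ≤ d) :
    σb n d * word n (st3Wd d c) = word n (st3Wd (d + 1) c) := by
  rcases c.eq_nil_or_concat with rfl | ⟨c', u, rfl⟩
  · rw [st3Wd_nil, st3Wd_nil, (by omega : d + 1 - 1 = d),
      st3_descList_cons (le_refl 1) hd, st3_word_cons]
  · rw [List.concat_eq_append] at *
    have hu := hbd u (by simp)
    have hc'u : ∀ x ∈ c', x < u := fun x hx =>
      (List.pairwise_append.mp hc).2.2 x hx u (by simp)
    rw [st3Wd_concat, st3Wd_concat, st3_word_append, st3_word_append, ← mul_assoc]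
    have hcomm : σb n d * word n (st3Wd u c') = word n (st3Wd u c') * σb n d := by
      refine st3_σ_word_comm ?_
      intro y hy
      have hb := st3Wd_bounds (N := u) (by omega)
        (fun z hz => ⟨(hbd z (by simp [hz])).1, le_of_lt (hc'u z hz)⟩) y hy
      exact (st3_σcomm (by omega)).symm
    rw [hcomm, mul_assoc]
    congr 1
    rw [(by omega : d + 1 - 1 = d)]
    conv_rhs => rw [st3_descList_cons (show 1 ≤ u by omega) (show u ≤ d by omega)]
    rw [st3_word_cons]

lemma st3_compl_split (l' : List ℕ) (d N : ℕ) (h2 : 2 ≤ d) (hdN : d < N)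
    (hl' : ∀ x ∈ l', x < d) :
    (List.range' 2 (N - 2)).filter (fun u => u ∉ l' ++ [d]) =
      ((List.range' 2 (d - 2)).filter fun u => u ∉ l') ++ List.range' (d + 1) (N - 1 - d) := by
  have e1 : List.range' 2 (d - 1) = List.range' 2 (d - 2) ++ [d] := by
    rw [(by omega : d - 1 = (d - 2) + 1), st3_range'_concat, (by omega : 2 + (d - 2) = d)]
  have e2 : List.range' 2 (d - 1) ++ List.range' (d + 1) (N - 1 - d) =
      List.range' 2 (N - 2) := by
    have h := List.range'_append (s := 2) (m := d - 1) (n := N - 1 - d) (step := 1)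
    simp only [one_mul] at h
    rw [(by omega : 2 + (d - 1) = d + 1)] at h
    rw [h, (by omega : d - 1 + (N - 1 - d) = N - 2)]
  rw [← e2, e1, List.filter_append, List.filter_append]
  have f1 : [d].filter (fun u => u ∉ l' ++ [d]) = [] := by simp
  have f2 : (List.range' (d + 1) (N - 1 - d)).filter (fun u => u ∉ l' ++ [d]) =
      List.range' (d + 1) (N - 1 - d) := by
    refine List.filter_eq_self.mpr ?_
    intro x hx
    rw [List.mem_range'_1] at hx
    simp only [List.mem_append, List.mem_singleton, decide_eq_true_eq]
    push_neg
    exact ⟨fun h => by have := hl' x h; omega, by omega⟩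
  have f3 : (List.range' 2 (d - 2)).filter (fun u => u ∉ l' ++ [d]) =
      (List.range' 2 (d - 2)).filter (fun u => u ∉ l') := by
    refine List.filter_congr ?_
    intro x hx
    rw [List.mem_range'_1] at hx
    simp only [List.mem_append, List.mem_singleton, decide_eq_decide]
    constructor
    · intro h; push_neg at h; exact h.1
    · intro h; push_neg; exact ⟨h, by omega⟩
  rw [f1, f2, f3, List.append_nil]

lemma st3_main (n : ℕ) (l : List ℕ) : ∀ N : ℕ,
    List.Pairwise (· < ·) (1 :: (l ++ [N])) →
    word n (st3Wd N l).reverse =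
      word n (st3Wd N ((List.range' 2 (N - 2)).filter fun u => u ∉ l)) := by
  induction l using List.reverseRecOn with
  | nil =>
    intro N hN
    have hN2 : 1 < N := (List.pairwise_cons.mp hN).1 N (by simp)
    have hfilter : (List.range' 2 (N - 2)).filter (fun u => u ∉ ([] : List ℕ)) =
        List.range' 2 (N - 2) := by simp
    rw [hfilter, st3Wd_nil, st3_descList_reverse]
    have h2 := st3Wd_range' (N - 2) [] 2
    rw [(by omega : 2 + (N - 2) = N), List.nil_append] at h2
    rw [h2, st3Wd_nil, (by norm_num : (2 : ℕ) - 1 = 1), st3_descList_self,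
      (by omega : N - 1 + 1 - 1 = (N - 2) + 1), List.range'_succ]
    rfl
  | append_singleton l' d ih =>
    intro N hN
    have hpl := (List.pairwise_cons.mp hN).2
    have h1d : 1 < d := (List.pairwise_cons.mp hN).1 d (by simp)
    have hdN : d < N := (List.pairwise_append.mp hpl).2.2 d (by simp) N (by simp)
    have hl'd : ∀ x ∈ l', x < d := fun x hx =>
      (List.pairwise_append.mp (List.pairwise_append.mp hpl).1).2.2 x hx d (by simp)
    have hl'1 : ∀ x ∈ l', 1 < x := fun x hx =>
      (List.pairwise_cons.mp hN).1 x (by simp [hx])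
    have hchain' : List.Pairwise (· < ·) (1 :: (l' ++ [d])) := by
      refine List.pairwise_cons.mpr ⟨?_, (List.pairwise_append.mp hpl).1⟩
      intro x hx
      rcases List.mem_append.mp hx with h | h
      · exact hl'1 x h
      · simp at h; omega
    have IH := ih d hchain'
    set c' : List ℕ := (List.range' 2 (d - 2)).filter (fun u => u ∉ l') with hc'def
    have hc'mem : ∀ y ∈ c', 2 ≤ y ∧ y + 1 ≤ d := by
      intro y hy
      rw [hc'def, List.mem_filter, List.mem_range'_1] at hy
      omega
    have hc'pw : List.Pairwise (· < ·) c' :=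
      (List.pairwise_lt_range' (s := 2) (n := d - 2)).sublist List.filter_sublist
    have hWc'bd : ∀ y ∈ st3Wd d c', 1 ≤ y ∧ y + 1 ≤ d :=
      st3Wd_bounds (by omega) (fun y hy => by have := hc'mem y hy; exact ⟨by omega, by omega⟩)
    -- rewrite RHS
    rw [st3_compl_split l' d N (by omega) hdN hl'd]
    have hNe := st3Wd_range' (N - 1 - d) c' (d + 1)
    rw [(by omega : d + 1 + (N - 1 - d) = N)] at hNe
    rw [hNe, st3_word_append]
    -- rewrite LHS
    rw [st3Wd_concat, List.reverse_append, st3_word_append, st3_descList_reverse, IH,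
      (by omega : N - 1 + 1 - d = (N - 1 - d) + 1), List.range'_succ, st3_word_cons]
    have hcomm : word n (List.range' (d + 1) (N - 1 - d)) * word n (st3Wd d c') =
        word n (st3Wd d c') * word n (List.range' (d + 1) (N - 1 - d)) := by
      refine st3_word_comm ?_
      intro x hx y hy
      rw [List.mem_range'_1] at hx
      have := hWc'bd y hy
      exact (st3_σcomm (by omega)).symm
    rw [mul_assoc, hcomm, ← mul_assoc,
      st3_extend c' d (by omega) hc'pw (fun y hy => ⟨by have := hc'mem y hy; omega,
        (hc'mem y hy).2⟩)]

end Statement3Aux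

/-- the reversal anti-automorphism sends `δ_{d_1,…,d_m}` to `δ_{u_1,…,u_k}`. -/
theorem statement3 (n : ℕ) (hn : 3 ≤ n) (rev : B n → B n)
    (hrev : ∀ a b : B n, rev (a * b) = rev b * rev a)
    (hσ : ∀ i : ℕ, 1 ≤ i → i ≤ n - 1 → rev (σb n i) = σb n i)
    (l : List ℕ) (hl : List.Chain' (· < ·) (1 :: (l ++ [n]))) :
    rev (deltaD n l) = deltaD n ((List.range' 2 (n - 2)).filter fun u => u ∉ l) := by
  have hrev1 : rev 1 = 1 := by
    have h : rev 1 * 1 = rev 1 * rev 1 := by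
      rw [mul_one]; simpa using (hrev 1 1)
    exact (mul_left_cancel h).symm
  have hrevσ : ∀ i : ℕ, rev (σb n i) = σb n i := by
    intro i
    by_cases hi : 1 ≤ i ∧ i ≤ n - 1
    · exact hσ i hi.1 hi.2
    · rw [st3_σb_out (i := i) (by omega), hrev1]
  have hrevword : ∀ w : List ℕ, rev (word n w) = word n w.reverse := by
    intro w
    induction w with
    | nil => rw [st3_word_nil, hrev1]; simp [word]
    | cons x w ihw =>
      rw [st3_word_cons, hrev, ihw, hrevσ, List.reverse_cons, st3_word_append]
      simp [word]
  have hpw : List.Pairwise (· < ·) (1 :: (l ++ [n])) := List.isChain_iff_pairwise.mp hl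
  rw [st3_deltaD_eq, st3_deltaD_eq, hrevword, st3_main n l n hpw]
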